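/- Let A = max_{1 ≤ i ≤ C} max(0, i − c¹(i) − c²(i)) and m* = max_{1 ≤ i ≤ C} max(0, i − A − c¹(i)). Then the minimum of |S²| over all valid assignments (S¹, S²) with |S¹ ∪ S²| = C − A equals m*. (Formula version of Lemma 5 of the paper: among all assignments achieving the minimum number of base-layer skips, the minimum possible number of chunks fetched over the less preferable link 2 equals m*, and it is attained.) -/
import Mathlib


/-- `(S¹, S²)` is a valid assignment of chunks to the two links: `S¹, S²` are disjoint
subsets of `{1,…,C}` and, for every `i ∈ {1,…,C}` and each link `k`, the number of
chunks of `S^k` among the first `i` is at most the per-deadline capacity `c^k(i)`. -/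
def ValidAssignment (C : ℕ) (c1 c2 : ℕ → ℕ) (S1 S2 : Finset ℕ) : Prop :=
  S1 ⊆ Finset.Icc 1 C ∧ S2 ⊆ Finset.Icc 1 C ∧ Disjoint S1 S2 ∧
  (∀ i ∈ Finset.Icc 1 C, (S1 ∩ Finset.Icc 1 i).card ≤ c1 i) ∧
  (∀ i ∈ Finset.Icc 1 C, (S2 ∩ Finset.Icc 1 i).card ≤ c2 i)

/-- Greedy assignment: prefer link 1, then link 2, else skip. -/
def greedy (c1 c2 : ℕ → ℕ) : ℕ → Finset ℕ × Finset ℕ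
  | 0 => (∅, ∅)
  | n+1 =>
    if (greedy c1 c2 n).1.card < c1 (n+1) then
      (insert (n+1) (greedy c1 c2 n).1, (greedy c1 c2 n).2)
    else if (greedy c1 c2 n).2.card < c2 (n+1) then
      ((greedy c1 c2 n).1, insert (n+1) (greedy c1 c2 n).2)
    else greedy c1 c2 n

lemma greedy_inv (C : ℕ) (c1 c2 : ℕ → ℕ)
    (hc1 : ∀ i i', 1 ≤ i → i ≤ i' → i' ≤ C → c1 i ≤ c1 i')
    (hc2 : ∀ i i', 1 ≤ i → i ≤ i' → i' ≤ C → c2 i ≤ c2 i') :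
    ∀ n, n ≤ C →
      (greedy c1 c2 n).1 ⊆ Finset.Icc 1 n ∧
      (greedy c1 c2 n).2 ⊆ Finset.Icc 1 n ∧
      Disjoint (greedy c1 c2 n).1 (greedy c1 c2 n).2 ∧
      (∀ i, 1 ≤ i → i ≤ n → ((greedy c1 c2 n).1 ∩ Finset.Icc 1 i).card ≤ c1 i) ∧
      (∀ i, 1 ≤ i → i ≤ n → ((greedy c1 c2 n).2 ∩ Finset.Icc 1 i).card ≤ c2 i) ∧
      (greedy c1 c2 n).1.card + (greedy c1 c2 n).2.card
        + (Finset.Icc 1 n).sup (fun j => j - (c1 j + c2 j)) = n ∧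
      (greedy c1 c2 n).2.card ≤
        (Finset.Icc 1 n).sup
          (fun j => j - (Finset.Icc 1 n).sup (fun j => j - (c1 j + c2 j)) - c1 j) := by
  intro n
  induction n with
  | zero => simp [greedy]
  | succ n ih =>
    intro h
    obtain ⟨h1, h2, h3, h4, h5, h6, h7⟩ := ih (by omega)
    set S1 := (greedy c1 c2 n).1 with hS1
    set S2 := (greedy c1 c2 n).2 with hS2
    set K := (Finset.Icc 1 n).sup (fun j => j - (c1 j + c2 j)) with hK
    have hIcc : Finset.Icc 1 (n+1) = insert (n+1) (Finset.Icc 1 n) := by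
      ext j; simp only [Finset.mem_Icc, Finset.mem_insert]; omega
    have hKs : (Finset.Icc 1 (n+1)).sup (fun j => j - (c1 j + c2 j))
        = max ((n+1) - (c1 (n+1) + c2 (n+1))) K := by
      rw [hIcc, Finset.sup_insert]
    have hn1S1 : (n+1) ∉ S1 := fun hx => by
      have := h1 hx; simp only [Finset.mem_Icc] at this; omega
    have hn1S2 : (n+1) ∉ S2 := fun hx => by
      have := h2 hx; simp only [Finset.mem_Icc] at this; omega
    have hsub1 : S1 ⊆ Finset.Icc 1 (n+1) :=
      h1.trans (Finset.Icc_subset_Icc le_rfl (by omega))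
    have hsub2 : S2 ⊆ Finset.Icc 1 (n+1) :=
      h2.trans (Finset.Icc_subset_Icc le_rfl (by omega))
    have hs1c : S1.card ≤ c1 (n+1) := by
      rcases Nat.eq_zero_or_pos n with h0 | h0
      · have : S1 = ∅ := by
          rw [hS1]; subst h0; simp [greedy]
        simp [this]
      · have h4' := h4 n h0 le_rfl
        rw [Finset.inter_eq_left.mpr h1] at h4'
        exact h4'.trans (hc1 n (n+1) h0 (by omega) h)
    have hs2c : S2.card ≤ c2 (n+1) := by
      rcases Nat.eq_zero_or_pos n with h0 | h0
      · have : S2 = ∅ := by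
          rw [hS2]; subst h0; simp [greedy]
        simp [this]
      · have h5' := h5 n h0 le_rfl
        rw [Finset.inter_eq_left.mpr h2] at h5'
        exact h5'.trans (hc2 n (n+1) h0 (by omega) h)
    have hmono : (Finset.Icc 1 n).sup (fun j => j - K - c1 j) ≤
        (Finset.Icc 1 (n+1)).sup (fun j => j - K - c1 j) :=
      Finset.sup_mono (Finset.Icc_subset_Icc le_rfl (by omega))
    show _ ∧ _ ∧ _ ∧ _ ∧ _ ∧ _ ∧ _
    rw [greedy, ← hS1, ← hS2]
    split_ifs with hif1 hif2
    · -- link 1 gets chunk n+1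
      dsimp only
      have hKeq : (Finset.Icc 1 (n+1)).sup (fun j => j - (c1 j + c2 j)) = K := by
        rw [hKs]; omega
      refine ⟨?_, hsub2, ?_, ?_, ?_, ?_, ?_⟩
      · exact Finset.insert_subset (by simp) hsub1
      · exact Finset.disjoint_insert_left.mpr ⟨hn1S2, h3⟩
      · intro i hi1 hi2
        rcases Nat.lt_or_ge i (n+1) with hlt | hge
        · rw [Finset.insert_inter_of_notMem (by simp; omega)]
          exact h4 i hi1 (by omega)
        · have hieq : i = n+1 := by omega
          subst hieq
          rw [Finset.inter_eq_left.mpr (Finset.insert_subset (by simp) hsub1),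
            Finset.card_insert_of_notMem hn1S1]
          omega
      · intro i hi1 hi2
        rcases Nat.lt_or_ge i (n+1) with hlt | hge
        · exact h5 i hi1 (by omega)
        · have hieq : i = n+1 := by omega
          subst hieq
          rw [Finset.inter_eq_left.mpr hsub2]
          exact hs2c
      · rw [hKeq, Finset.card_insert_of_notMem hn1S1]; omega
      · rw [hKeq]; exact h7.trans hmono
    · -- link 2 gets chunk n+1
      dsimp only
      have hs1eq : S1.card = c1 (n+1) := by omega
      have hKeq : (Finset.Icc 1 (n+1)).sup (fun j => j - (c1 j + c2 j)) = K := by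
        rw [hKs]; omega
      refine ⟨hsub1, ?_, ?_, ?_, ?_, ?_, ?_⟩
      · exact Finset.insert_subset (by simp) hsub2
      · exact Finset.disjoint_insert_right.mpr ⟨hn1S1, h3⟩
      · intro i hi1 hi2
        rcases Nat.lt_or_ge i (n+1) with hlt | hge
        · exact h4 i hi1 (by omega)
        · have hieq : i = n+1 := by omega
          subst hieq
          rw [Finset.inter_eq_left.mpr hsub1]
          omega
      · intro i hi1 hi2
        rcases Nat.lt_or_ge i (n+1) with hlt | hge
        · rw [Finset.insert_inter_of_notMem (by simp; omega)]
          exact h5 i hi1 (by omega)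
        · have hieq : i = n+1 := by omega
          subst hieq
          rw [Finset.inter_eq_left.mpr (Finset.insert_subset (by simp) hsub2),
            Finset.card_insert_of_notMem hn1S2]
          omega
      · rw [hKeq, Finset.card_insert_of_notMem hn1S2]; omega
      · rw [hKeq, Finset.card_insert_of_notMem hn1S2]
        have hle : (n+1) - K - c1 (n+1) ≤
            (Finset.Icc 1 (n+1)).sup (fun j => j - K - c1 j) :=
          Finset.le_sup (f := fun j => j - K - c1 j) (by simp)
        omega
    · -- skip chunk n+1
      simp only [← hS1, ← hS2]
      have hs1eq : S1.card = c1 (n+1) := by omega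
      have hs2eq : S2.card = c2 (n+1) := by omega
      have hKeq : (Finset.Icc 1 (n+1)).sup (fun j => j - (c1 j + c2 j)) = K + 1 := by
        rw [hKs]; omega
      refine ⟨hsub1, hsub2, h3, ?_, ?_, ?_, ?_⟩
      · intro i hi1 hi2
        rcases Nat.lt_or_ge i (n+1) with hlt | hge
        · exact h4 i hi1 (by omega)
        · have hieq : i = n+1 := by omega
          subst hieq
          rw [Finset.inter_eq_left.mpr hsub1]; omega
      · intro i hi1 hi2
        rcases Nat.lt_or_ge i (n+1) with hlt | hge
        · exact h5 i hi1 (by omega)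
        · have hieq : i = n+1 := by omega
          subst hieq
          rw [Finset.inter_eq_left.mpr hsub2]; omega
      · rw [hKeq]; omega
      · rw [hKeq]
        have hle : (n+1) - (K+1) - c1 (n+1) ≤
            (Finset.Icc 1 (n+1)).sup (fun j => j - (K+1) - c1 j) :=
          Finset.le_sup (f := fun j => j - (K+1) - c1 j) (by simp)
        omega

/-- Formula version of Lemma 5: with `A = max_{1≤i≤C} max(0, i − c¹(i) − c²(i))` and
`m* = max_{1≤i≤C} max(0, i − A − c¹(i))` (natural subtraction realizes `max(0,·)`),
among all valid assignments achieving the minimum number `A` of base-layer skips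
(i.e. with `|S¹ ∪ S²| = C − A`), the minimum possible number of chunks fetched over
the less preferable link 2 equals `m*`, and it is attained. -/
theorem min_link2_usage
    (C : ℕ) (hC : 1 ≤ C) (c1 c2 : ℕ → ℕ)
    (hc1 : ∀ i i', 1 ≤ i → i ≤ i' → i' ≤ C → c1 i ≤ c1 i')
    (hc2 : ∀ i i', 1 ≤ i → i ≤ i' → i' ≤ C → c2 i ≤ c2 i')
    (A : ℕ) (hA : A = (Finset.Icc 1 C).sup (fun i => i - (c1 i + c2 i)))
    (m : ℕ) (hm : m = (Finset.Icc 1 C).sup (fun i => i - A - c1 i)) :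
    IsLeast {n : ℕ | ∃ S1 S2 : Finset ℕ, ValidAssignment C c1 c2 S1 S2 ∧
      (S1 ∪ S2).card = C - A ∧ S2.card = n} m := by
  have hAC : A ≤ C := by
    rw [hA]
    apply Finset.sup_le
    intro j hj
    simp only [Finset.mem_Icc] at hj
    omega
  -- lower bound for any valid assignment with union card C - A
  have lb : ∀ S1 S2 : Finset ℕ, ValidAssignment C c1 c2 S1 S2 →
      (S1 ∪ S2).card = C - A → m ≤ S2.card := by
    rintro S1 S2 ⟨hV1, hV2, hVd, hV4, hV5⟩ hcard
    rw [hm]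
    apply Finset.sup_le
    intro i hi
    have hi' := hi
    simp only [Finset.mem_Icc] at hi'
    have hsplit : ((S1 ∪ S2) ∩ Finset.Icc 1 i).card + ((S1 ∪ S2) \ Finset.Icc 1 i).card
        = (S1 ∪ S2).card := Finset.card_inter_add_card_sdiff _ _
    have htail : ((S1 ∪ S2) \ Finset.Icc 1 i).card ≤ C - i := by
      have hsub : (S1 ∪ S2) \ Finset.Icc 1 i ⊆ Finset.Icc (i+1) C := by
        intro j hj
        simp only [Finset.mem_sdiff, Finset.mem_union, Finset.mem_Icc] at hj ⊢
        rcases hj.1 with hj1 | hj2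
        · have := hV1 hj1; simp only [Finset.mem_Icc] at this; omega
        · have := hV2 hj2; simp only [Finset.mem_Icc] at this; omega
      calc ((S1 ∪ S2) \ Finset.Icc 1 i).card ≤ (Finset.Icc (i+1) C).card :=
            Finset.card_le_card hsub
        _ = C - i := by rw [Nat.card_Icc]; omega
    have hhead : ((S1 ∪ S2) ∩ Finset.Icc 1 i).card ≤ c1 i + S2.card := by
      rw [Finset.union_inter_distrib_right]
      calc (S1 ∩ Finset.Icc 1 i ∪ S2 ∩ Finset.Icc 1 i).card
          ≤ (S1 ∩ Finset.Icc 1 i).card + (S2 ∩ Finset.Icc 1 i).card :=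
            Finset.card_union_le _ _
        _ ≤ c1 i + S2.card := by
            have ha := hV4 i hi
            have hb : (S2 ∩ Finset.Icc 1 i).card ≤ S2.card :=
              Finset.card_le_card (fun x hx => (Finset.mem_inter.mp hx).1)
            omega
    omega
  constructor
  · -- membership: greedy witness
    obtain ⟨g1, g2, g3, g4, g5, g6, g7⟩ := greedy_inv C c1 c2 hc1 hc2 C le_rfl
    have hvalid : ValidAssignment C c1 c2 (greedy c1 c2 C).1 (greedy c1 c2 C).2 := by
      refine ⟨g1, g2, g3, ?_, ?_⟩
      · intro i hi; simp only [Finset.mem_Icc] at hi; exact g4 i hi.1 hi.2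
      · intro i hi; simp only [Finset.mem_Icc] at hi; exact g5 i hi.1 hi.2
    have hcard : ((greedy c1 c2 C).1 ∪ (greedy c1 c2 C).2).card = C - A := by
      rw [Finset.card_union_of_disjoint g3]
      rw [← hA] at g6
      omega
    have hub : (greedy c1 c2 C).2.card ≤ m := by
      rw [← hA] at g7
      rw [hm]
      exact g7
    exact ⟨(greedy c1 c2 C).1, (greedy c1 c2 C).2, hvalid, hcard,
      le_antisymm hub (lb _ _ hvalid hcard)⟩
  · rintro n ⟨S1, S2, hV, hcard, rfl⟩
    exact lb S1 S2 hV hcard
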